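/- Let C be a multiset of real numbers with |C| = n ≥ 3 and sorted elements l₀ ≤ l₁ ≤ … ≤ l_{n−1}. If C' = (C − {l_{n−1}}) + {v} is obtained by replacing one occurrence of the largest element by a value v ≤ l₀, then preSum(C) − preSum(C') = (l_{n−2} − l₀) + (l_{n−2} − l_{n−3}) + (l₁ − l₀); in particular this difference does not depend on v. -/

import Mathlib

/-- The `i`-th smallest element of a multiset of reals (0-indexed). -/
noncomputable def nthSmallest (M : Multiset ℝ) (i : ℕ) : ℝ :=
  (M.sort (· ≤ ·)).getD i 0

/-- The preprocessed sum of a multiset `M` with sorted elements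
`l₀ ≤ l₁ ≤ … ≤ l_{n−1}`: the sum after replacing one occurrence of the smallest
value by the second smallest and one occurrence of the largest value by the
second largest, i.e. `(Σ M) − l₀ − l_{n−1} + l₁ + l_{n−2}`. -/
noncomputable def preSum (M : Multiset ℝ) : ℝ :=
  M.sum - nthSmallest M 0 - nthSmallest M (M.card - 1)
    + nthSmallest M 1 + nthSmallest M (M.card - 2)

/-- The preprocessed centroid of a multiset `M`. -/
noncomputable def preMean (M : Multiset ℝ) : ℝ := preSum M / M.card

/-!
Since `v` lies below every element of `C`, the sorted list of `C'` is `v` followed by the sorted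
list of `C` with its last entry removed. Hence `l'₀ = v` and `l'ᵢ₊₁ = lᵢ` for `i ≤ n - 2`, and
`Σ C' = Σ C - l_{n-1} + v`; substituting into `preSum` the two occurrences of `v` cancel.
-/

open Multiset

lemma nthSmallest_mem {M : Multiset ℝ} {i : ℕ} (hi : i < card M) : nthSmallest M i ∈ M := by
  have hi' : i < (M.sort (· ≤ ·)).length := by rwa [length_sort]
  rw [nthSmallest, List.getD_eq_getElem _ _ hi', ← mem_sort (· ≤ ·)]
  exact List.getElem_mem hi'

lemma nthSmallest_zero_le {M : Multiset ℝ} {x : ℝ} (hx : x ∈ M) : nthSmallest M 0 ≤ x := by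
  have hsorted := pairwise_sort M (· ≤ ·)
  rw [← mem_sort (· ≤ ·)] at hx
  rw [nthSmallest]
  cases h : M.sort (· ≤ ·) with
  | nil => simp [h] at hx
  | cons a t =>
    rw [h, List.pairwise_cons] at hsorted
    rw [h, List.mem_cons] at hx
    rcases hx with rfl | hx
    · exact le_rfl
    · exact hsorted.1 x hx

section cons_lowerBound

variable {M : Multiset ℝ} {v : ℝ} (hv : ∀ x ∈ M, v ≤ x)
include hv

lemma nthSmallest_cons_zero : nthSmallest (v ::ₘ M) 0 = v := by
  rw [nthSmallest, sort_cons _ _ _ hv, List.getD_cons_zero]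

lemma nthSmallest_cons_succ (i : ℕ) : nthSmallest (v ::ₘ M) (i + 1) = nthSmallest M i := by
  rw [nthSmallest, sort_cons _ _ _ hv, List.getD_cons_succ, nthSmallest]

end cons_lowerBound

section erase_largest

variable {M : Multiset ℝ} {n : ℕ} (hn : card M = n + 1)
include hn

lemma sort_erase_largest :
    (M.erase (nthSmallest M n)).sort (· ≤ ·) = (M.sort (· ≤ ·)).dropLast := by
  set L := M.sort (· ≤ ·) with hL
  have hlen : L.length = n + 1 := by rw [hL, length_sort, hn]
  have hne : L ≠ [] := List.ne_nil_of_length_pos (by omega)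
  have hlast : nthSmallest M n = L.getLast hne := by
    rw [nthSmallest, ← hL, List.getLast_eq_getElem, List.getD_eq_getElem _ _ (by omega)]
    simp only [hlen, Nat.add_sub_cancel]
  have hsplit : M = L.getLast hne ::ₘ (L.dropLast : Multiset ℝ) :=
    calc M = (L : Multiset ℝ) := (sort_eq M _).symm
      _ = ↑(L.dropLast ++ [L.getLast hne]) := by rw [List.dropLast_append_getLast]
      _ = _ := coe_eq_coe.mpr (List.perm_append_singleton _ _)
  rw [hlast, hsplit, erase_cons_head, coe_sort]
  exact List.mergeSort_eq_self _ ((pairwise_sort M _).sublist (List.dropLast_sublist L))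

lemma nthSmallest_erase_largest {i : ℕ} (hi : i < n) :
    nthSmallest (M.erase (nthSmallest M n)) i = nthSmallest M i := by
  have hi' : i < (M.sort (· ≤ ·)).dropLast.length := by simp [hn, hi]
  rw [nthSmallest, sort_erase_largest hn, List.getD_eq_getElem _ _ hi',
    List.getElem_dropLast, nthSmallest, List.getD_eq_getElem]

end erase_largest

/-- Replacing one occurrence of the largest element of `C` by a value
`v ≤ l₀` changes the preprocessed sum by
`(l_{n−2} − l₀) + (l_{n−2} − l_{n−3}) + (l₁ − l₀)`, independently of `v`. -/
theorem preSum_replace_largest (C : Multiset ℝ) (n : ℕ) (hn : 3 ≤ n)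
    (hcard : C.card = n) (v : ℝ) (hv : v ≤ nthSmallest C 0) :
    preSum C - preSum (C.erase (nthSmallest C (n - 1)) + {v}) =
      (nthSmallest C (n - 2) - nthSmallest C 0)
        + (nthSmallest C (n - 2) - nthSmallest C (n - 3))
        + (nthSmallest C 1 - nthSmallest C 0) := by
  obtain ⟨k, rfl⟩ : ∃ k, n = k + 3 := ⟨n - 3, by omega⟩
  simp only [Nat.reduceSubDiff]
  set D := C.erase (nthSmallest C (k + 2))
  have hm : nthSmallest C (k + 2) ∈ C := nthSmallest_mem (by omega)
  have hvD : ∀ x ∈ D, v ≤ x := fun x hx => hv.trans (nthSmallest_zero_le (mem_of_mem_erase hx))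
  have hD : ∀ i < k + 2, nthSmallest D i = nthSmallest C i :=
    fun i hi => nthSmallest_erase_largest hcard hi
  have hsum : nthSmallest C (k + 2) + D.sum = C.sum := sum_erase hm
  have hcardD : card (v ::ₘ D) = k + 3 := by simp [D, card_erase_of_mem hm, hcard]
  rw [add_comm, singleton_add]
  unfold preSum
  rw [hcard, hcardD, nthSmallest_cons_zero hvD, sum_cons]
  simp only [Nat.reduceSubDiff]
  rw [nthSmallest_cons_succ hvD, nthSmallest_cons_succ hvD, nthSmallest_cons_succ hvD,
    hD 0 (by omega), hD (k + 1) (by omega), hD k (by omega)]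
  linarith
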